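/- arXiv:quant-ph/0402143 — 7 statements merged into one kernel-verified Lean document; each statement's English description precedes it below -/
import Mathlib

section
/- For every N×N complex unitary matrix U and every real vector λ ∈ ℝ^N with Λ = Diag(λ), the vector of diagonal entries of U† L(U Λ U†) U equals the real vector (Θᵀ B Θ + Diag(Θᵀ d)) λ, where Θ is the N×N real matrix with entries Θ_ij = |U_ij|². -/
/-!
Each jump term of `L` collapses: `E_ij ρ E_ij† = ρ_jj E_ii` and `E_ij† E_ij = E_jj`, so
`L(ρ) = Diag(Γ diag ρ) - ½ (Diag c ρ + ρ Diag c)` with `Γ_ij = γ_ij` and `c_j = Σ_i γ_ij`.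
For `ρ = U Λ U†` we have `diag ρ = Θ λ` and `diag (U† Diag v U) = Θᵀ v`, while unitarity turns
`U† (Diag c ρ + ρ Diag c) U` into `M Λ + Λ M` with `M = U† Diag c U`, whose diagonal is
`2 (Θᵀ c) ⊙ λ`. Hence `diag (U† L(ρ) U) = Θᵀ Γ Θ λ - (Θᵀ c) ⊙ λ`; finally `Γ = B` because
`γ_ii = 0`, and `d = -c`.
-/

open Matrix Finset

/-- The spontaneous-emission Lindbladian
`L(ρ) = Σ_{i,j} γ_ij (E_ij ρ E_ij† − (1/2)(E_ij† E_ij ρ + ρ E_ij† E_ij))`. -/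
noncomputable def lindblad {N : ℕ} (γ : Fin N → Fin N → ℝ)
    (ρ : Matrix (Fin N) (Fin N) ℂ) : Matrix (Fin N) (Fin N) ℂ :=
  ∑ i : Fin N, ∑ j : Fin N, (γ i j : ℂ) •
    (Matrix.single i j 1 * ρ * (Matrix.single i j 1)ᴴ
      - (1 / 2 : ℂ) • ((Matrix.single i j 1)ᴴ * Matrix.single i j 1 * ρ
          + ρ * (Matrix.single i j 1)ᴴ * Matrix.single i j 1))

namespace Matrix

variable {m n : Type*}

theorem map_ofReal_mulVec [Fintype n] (M : Matrix m n ℝ) (v : n → ℝ) :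
    M.map (↑) *ᵥ (fun j => (v j : ℂ)) = fun i => ((M *ᵥ v) i : ℂ) :=
  funext fun i => (RingHom.map_mulVec Complex.ofRealHom M v i).symm

noncomputable def normSqEntries (U : Matrix m n ℂ) : Matrix m n ℝ := of fun i j => ‖U i j‖ ^ 2

theorem normSqEntries_conjTranspose (U : Matrix m n ℂ) :
    normSqEntries Uᴴ = (normSqEntries U)ᵀ := by
  ext i j
  simp [normSqEntries]

theorem diag_mul_diagonal_mul_conjTranspose [Fintype n] [DecidableEq n] (U : Matrix m n ℂ)
    (v : n → ℂ) : (U * diagonal v * Uᴴ).diag = (normSqEntries U).map (↑) *ᵥ v := by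
  ext i
  rw [diag_apply, mul_apply]
  simp only [mul_diagonal, conjTranspose_apply, mulVec, dotProduct, map_apply, normSqEntries,
    of_apply, Complex.ofReal_pow, ← Complex.mul_conj', Complex.star_def]
  exact Finset.sum_congr rfl fun j _ => by ring

theorem diag_conjTranspose_mul_diagonal_mul [Fintype m] [DecidableEq m] (U : Matrix m n ℂ)
    (v : m → ℂ) : (Uᴴ * diagonal v * U).diag = (normSqEntries U)ᵀ.map (↑) *ᵥ v := by
  simpa [normSqEntries_conjTranspose] using diag_mul_diagonal_mul_conjTranspose Uᴴ v

theorem conjTranspose_mul_anticomm_conj_mul {α : Type*} [Fintype m] [Fintype n] [DecidableEq n]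
    [Ring α] [StarRing α] {U : Matrix m n α} (hU : Uᴴ * U = 1) (C : Matrix m m α)
    (Λ : Matrix n n α) :
    Uᴴ * (C * (U * Λ * Uᴴ) + U * Λ * Uᴴ * C) * U = Uᴴ * C * U * Λ + Λ * (Uᴴ * C * U) := by
  have hρU : U * Λ * Uᴴ * U = U * Λ := by rw [Matrix.mul_assoc, hU, Matrix.mul_one]
  have hUρ : Uᴴ * (U * Λ * Uᴴ) = Λ * Uᴴ := by
    rw [← Matrix.mul_assoc, ← Matrix.mul_assoc, hU, Matrix.one_mul]
  rw [Matrix.mul_add, Matrix.add_mul]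
  congr 1
  · rw [Matrix.mul_assoc, Matrix.mul_assoc C, hρU]
    simp only [Matrix.mul_assoc]
  · rw [← Matrix.mul_assoc, hUρ]
    simp only [Matrix.mul_assoc]

end Matrix

theorem lindblad_eq {N : ℕ} (γ : Fin N → Fin N → ℝ) (ρ : Matrix (Fin N) (Fin N) ℂ) :
    lindblad γ ρ = diagonal ((of γ).map (↑) *ᵥ ρ.diag)
      - (1 / 2 : ℂ) • (diagonal (fun j => ∑ i, (γ i j : ℂ)) * ρ
        + ρ * diagonal (fun j => ∑ i, (γ i j : ℂ))) := by
  have gain : ∑ i, ∑ j, (γ i j : ℂ) • single i i (ρ j j) =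
      diagonal ((of γ).map (↑) *ᵥ ρ.diag) := by
    rw [← sum_single_eq_diagonal]
    refine Finset.sum_congr rfl fun i _ => ?_
    simp only [smul_single, mulVec, dotProduct, map_apply, of_apply, diag_apply, smul_eq_mul]
    exact (map_sum (singleAddMonoidHom (α := ℂ) i i) _ _).symm
  have decay : ∑ i, ∑ j, (γ i j : ℂ) • single j j (1 : ℂ) =
      diagonal (fun j => ∑ i, (γ i j : ℂ)) := by
    rw [Finset.sum_comm, ← sum_single_eq_diagonal]
    refine Finset.sum_congr rfl fun j _ => ?_
    rw [← Finset.sum_smul, smul_single, smul_eq_mul, mul_one]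
  have decay_left : ∑ i, ∑ j, (γ i j : ℂ) • (single j j 1 * ρ) =
      diagonal (fun j => ∑ i, (γ i j : ℂ)) * ρ := by
    simp only [← decay, Finset.sum_mul, smul_mul_assoc]
  have decay_right : ∑ i, ∑ j, (γ i j : ℂ) • (ρ * single j j 1) =
      ρ * diagonal (fun j => ∑ i, (γ i j : ℂ)) := by
    simp only [← decay, Finset.mul_sum, mul_smul_comm]
  simp only [lindblad, conjTranspose_single, star_one, single_mul_mul_single,
    single_mul_single_same, Matrix.mul_assoc ρ, one_mul, mul_one, smul_sub, smul_add,
    Finset.sum_sub_distrib, Finset.sum_add_distrib, smul_comm _ (1 / 2 : ℂ), ← Finset.smul_sum,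
    gain, decay_left, decay_right]

theorem diag_conjTranspose_mul_lindblad_mul {N : ℕ} (γ : Fin N → Fin N → ℝ)
    {U : Matrix (Fin N) (Fin N) ℂ} (hU : Uᴴ * U = 1) (μ : Fin N → ℂ) :
    (Uᴴ * lindblad γ (U * diagonal μ * Uᴴ) * U).diag =
      (normSqEntries U)ᵀ.map (↑) *ᵥ ((of γ).map (↑) *ᵥ ((normSqEntries U).map (↑) *ᵥ μ))
        - ((normSqEntries U)ᵀ.map (↑) *ᵥ fun j => ∑ i, (γ i j : ℂ)) * μ := by
  rw [lindblad_eq, Matrix.mul_sub, Matrix.sub_mul, diag_sub, diag_conjTranspose_mul_diagonal_mul,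
    diag_mul_diagonal_mul_conjTranspose, Matrix.mul_smul, Matrix.smul_mul,
    conjTranspose_mul_anticomm_conj_mul hU,
    ← diag_conjTranspose_mul_diagonal_mul U (fun j => ∑ i, (γ i j : ℂ))]
  ext k
  simp only [smul_add, diag_add, diag_smul, Pi.sub_apply, Pi.add_apply, Pi.smul_apply, Pi.mul_apply,
    diag_apply, mul_diagonal, diagonal_mul, smul_eq_mul]
  ring

theorem diag_of_conjugated_lindblad_general (N : ℕ)
    (γ : Fin N → Fin N → ℝ) (hγdiag : ∀ i, γ i i = 0)
    (U : Matrix (Fin N) (Fin N) ℂ) (hU : U ∈ Matrix.unitaryGroup (Fin N) ℂ)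
    (lam : Fin N → ℝ) :
    let Λ : Matrix (Fin N) (Fin N) ℂ := Matrix.diagonal (fun i => (lam i : ℂ))
    let Θ : Matrix (Fin N) (Fin N) ℝ := Matrix.of fun i j => ‖U i j‖ ^ 2
    let B : Matrix (Fin N) (Fin N) ℝ := Matrix.of fun i j => if i = j then 0 else γ i j
    let d : Fin N → ℝ := fun j => -∑ k : Fin N, γ k j
    ∀ k : Fin N,
      (Uᴴ * lindblad γ (U * Λ * Uᴴ) * U) k k
        = (((Θᵀ * B * Θ + Matrix.diagonal (Θᵀ.mulVec d)).mulVec lam) k : ℂ) := by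
  intro Λ Θ B d k
  have hΘ : Θ = normSqEntries U := rfl
  have hB : B = of γ := by
    ext i j
    by_cases h : i = j <;> simp [B, h, hγdiag]
  have hd : d = -fun j => ∑ i, γ i j := rfl
  have hUU : Uᴴ * U = 1 := (mem_unitaryGroup_iff').1 hU
  rw [← diag_apply (Uᴴ * _ * U), diag_conjTranspose_mul_lindblad_mul γ hUU]
  simp only [← Complex.ofReal_sum, map_ofReal_mulVec, Pi.sub_apply, Pi.mul_apply]
  rw [hΘ, hB, hd, add_mulVec, ← mulVec_mulVec, ← mulVec_mulVec, Pi.add_apply,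
    mulVec_diagonal, mulVec_neg, Pi.neg_apply]
  push_cast
  ring

/-- For every unitary `U` and real vector `lam` with `Λ = Diag(lam)`, the diagonal of
`U† L(U Λ U†) U` equals the real vector `(Θᵀ B Θ + Diag(Θᵀ d)) lam`, where
`Θ_ij = |U_ij|²`. -/
theorem diag_of_conjugated_lindblad (N : ℕ) (hN : 0 < N)
    (γ : Fin N → Fin N → ℝ) (hγ : ∀ i j, 0 ≤ γ i j) (hγdiag : ∀ i, γ i i = 0)
    (U : Matrix (Fin N) (Fin N) ℂ) (hU : U ∈ Matrix.unitaryGroup (Fin N) ℂ)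
    (lam : Fin N → ℝ) :
    let Λ : Matrix (Fin N) (Fin N) ℂ := Matrix.diagonal (fun i => (lam i : ℂ))
    let Θ : Matrix (Fin N) (Fin N) ℝ := Matrix.of fun i j => ‖U i j‖ ^ 2
    let B : Matrix (Fin N) (Fin N) ℝ := Matrix.of fun i j => if i = j then 0 else γ i j
    let d : Fin N → ℝ := fun j => -∑ k : Fin N, γ k j
    ∀ k : Fin N,
      (Uᴴ * lindblad γ (U * Λ * Uᴴ) * U) k k
        = (((Θᵀ * B * Θ + Matrix.diagonal (Θᵀ.mulVec d)).mulVec lam) k : ℂ) :=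
  diag_of_conjugated_lindblad_general N γ hγdiag U hU lam
end

section
/- Let T > 0, let M : [0,T] → Matrix (Fin n) (Fin n) ℝ be continuous with M(t)_ij ≥ 0 for all t and all i ≠ j, and let λ : [0,T] → ℝⁿ be differentiable with λ'(t) = M(t) λ(t) for all t ∈ [0,T]. If every entry of λ(0) is nonnegative, then every entry of λ(t) is nonnegative for all t ∈ [0,T]. -/
/-!
The total negative part `f t = ∑ i, (λ t i)⁻` is continuous, vanishes at `0`, and satisfies
`D⁺f ≤ n C f` on `[0, T)`, where `C` bounds the entries of `M` on `[0, T]`: a coordinate with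
`λ i > 0` has locally vanishing negative part, while for `λ i ≤ 0` the Metzler property gives
`-(M λ) i ≤ ∑ j, |M i j| (λ j)⁻`. Gronwall's inequality for Dini derivatives then forces `f = 0`.
-/

open Matrix Set Filter Topology

def Matrix.IsMetzler {m : Type*} (A : Matrix m m ℝ) : Prop :=
  ∀ i j, i ≠ j → 0 ≤ A i j

/-- `D⁺f(x) ≤ B` for the upper right Dini derivative `D⁺f(x) = limsup_{z → x⁺} slope f x z`. -/
def RightDiniLE (f : ℝ → ℝ) (x B : ℝ) : Prop :=
  ∀ r > B, ∀ᶠ z in 𝓝[>] x, slope f x z < r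

namespace RightDiniLE

variable {f g : ℝ → ℝ} {x B C : ℝ}

theorem mono (h : RightDiniLE f x B) (hBC : B ≤ C) : RightDiniLE f x C :=
  fun r hr => h r (hBC.trans_lt hr)

theorem const (c : ℝ) : RightDiniLE (fun _ => c) x 0 :=
  fun r hr => Eventually.of_forall fun z => by simpa [slope_def_field] using hr

theorem add (hf : RightDiniLE f x B) (hg : RightDiniLE g x C) :
    RightDiniLE (fun t => f t + g t) x (B + C) := by
  intro r hr
  set δ := (r - B - C) / 2 with hδ
  filter_upwards [hf (B + δ) (by linarith), hg (C + δ) (by linarith)] with z hfz hgz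
  have : slope (fun t => f t + g t) x z = slope f x z + slope g x z := by
    simp only [slope_def_field]; ring
  linarith

theorem sum {ι : Type*} (s : Finset ι) {F : ι → ℝ → ℝ} {D : ι → ℝ}
    (h : ∀ i ∈ s, RightDiniLE (F i) x (D i)) :
    RightDiniLE (fun t => ∑ i ∈ s, F i t) x (∑ i ∈ s, D i) := by
  classical
  induction s using Finset.induction_on with
  | empty => simpa using const (x := x) 0
  | insert i s hi ih =>
    simp only [Finset.sum_insert hi]
    exact add (h i (s.mem_insert_self i)) (ih fun j hj => h j (Finset.mem_insert_of_mem hj))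

end RightDiniLE

theorem le_zero_of_rightDiniLE_mul_self {f : ℝ → ℝ} {a b K : ℝ} (hf : ContinuousOn f (Icc a b))
    (ha : f a ≤ 0) (hD : ∀ x ∈ Ico a b, RightDiniLE f x (K * f x)) :
    ∀ x ∈ Icc a b, f x ≤ 0 := by
  intro x hx
  simpa only [gronwallBound_ε0_δ0] using
    le_gronwallBound_of_liminf_deriv_right_le (ε := 0) hf
      (fun x hx r hr => (hD x hx r hr).frequently) ha (fun x _ => (add_zero _).ge) x hx

theorem negPart_sub_negPart_le {α : Type*} [AddCommGroup α] [LinearOrder α]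
    [IsOrderedAddMonoid α] (a b : α) : a⁻ - b⁻ ≤ (a - b)⁻ := by
  simp only [negPart_def]
  grind

theorem HasDerivWithinAt.rightDiniLE_negPart {y : ℝ → ℝ} {d x : ℝ}
    (hy : HasDerivWithinAt y d (Ioi x) x) : RightDiniLE (fun t => (y t)⁻) x d⁻ := by
  intro r hr
  have hslope : Tendsto (fun z => (slope y x z)⁻) (𝓝[>] x) (𝓝 d⁻) :=
    continuous_negPart.continuousAt.tendsto.comp
      ((hasDerivWithinAt_iff_tendsto_slope' (lt_irrefl x)).1 hy)
  filter_upwards [hslope.eventually_lt_const hr, self_mem_nhdsWithin] with z hz hxz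
  have hzx : 0 < z - x := sub_pos.2 hxz
  calc slope (fun t => (y t)⁻) x z = ((y z)⁻ - (y x)⁻) / (z - x) := slope_def_field _ _ _
    _ ≤ (y z - y x)⁻ / (z - x) := by gcongr; exact negPart_sub_negPart_le _ _
    _ = (slope y x z)⁻ := by
      rw [slope_def_field, negPart_def, negPart_def, ← neg_div, ← max_div_div_right hzx.le,
        zero_div]
    _ < r := hz

theorem ContinuousAt.rightDiniLE_negPart_of_pos {y : ℝ → ℝ} {x : ℝ} (hy : ContinuousAt y x)
    (hx : 0 < y x) : RightDiniLE (fun t => (y t)⁻) x 0 := by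
  intro r hr
  filter_upwards [nhdsWithin_le_nhds (hy.eventually (lt_mem_nhds hx))] with z hz
  simp [slope_def_field, negPart_eq_zero.2 hz.le, negPart_eq_zero.2 hx.le, hr]

theorem Matrix.IsMetzler.negPart_mulVec_le {m : Type*} [Fintype m] {A : Matrix m m ℝ}
    (hA : A.IsMetzler) {v : m → ℝ} {i : m} (hv : v i ≤ 0) :
    ((A *ᵥ v) i)⁻ ≤ ∑ j, |A i j| * (v j)⁻ := by
  have hterm : ∀ j, A i j * -v j ≤ |A i j| * (v j)⁻ := by
    intro j
    rcases eq_or_ne i j with rfl | hij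
    · rw [← negPart_eq_neg.2 hv]
      exact mul_le_mul_of_nonneg_right (le_abs_self _) (negPart_nonneg _)
    · calc A i j * -v j ≤ A i j * (v j)⁻ :=
            mul_le_mul_of_nonneg_left (neg_le_negPart _) (hA i j hij)
        _ ≤ |A i j| * (v j)⁻ := mul_le_mul_of_nonneg_right (le_abs_self _) (negPart_nonneg _)
  rw [negPart_def, max_le_iff]
  refine ⟨?_, Finset.sum_nonneg fun j _ => mul_nonneg (abs_nonneg _) (negPart_nonneg _)⟩
  simpa [mulVec, dotProduct, ← Finset.sum_neg_distrib] using Finset.sum_le_sum fun j _ => hterm j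

section LinearSystem

variable {m : Type*} [Fintype m] {u : ℝ → m → ℝ} {A : Matrix m m ℝ} {x : ℝ}

theorem Matrix.IsMetzler.rightDiniLE_negPart_apply (hA : A.IsMetzler) {i : m}
    (hu : HasDerivAt (fun t => u t i) ((A *ᵥ u x) i) x) :
    RightDiniLE (fun t => (u t i)⁻) x (∑ j, |A i j| * (u x j)⁻) := by
  have hbound_nonneg : 0 ≤ ∑ j, |A i j| * (u x j)⁻ :=
    Finset.sum_nonneg fun j _ => mul_nonneg (abs_nonneg _) (negPart_nonneg _)
  rcases lt_or_ge 0 (u x i) with hpos | hnonpos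
  · exact (hu.continuousAt.rightDiniLE_negPart_of_pos hpos).mono hbound_nonneg
  · exact hu.hasDerivWithinAt.rightDiniLE_negPart.mono (hA.negPart_mulVec_le hnonpos)

theorem Matrix.IsMetzler.rightDiniLE_sum_negPart (hA : A.IsMetzler) {C : ℝ}
    (hC : ∀ i j, |A i j| ≤ C) (hu : ∀ i, HasDerivAt (fun t => u t i) ((A *ᵥ u x) i) x) :
    RightDiniLE (fun t => ∑ i, (u t i)⁻) x (Fintype.card m * C * ∑ j, (u x j)⁻) := by
  refine (RightDiniLE.sum _ fun i _ => hA.rightDiniLE_negPart_apply (hu i)).mono ?_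
  calc ∑ i, ∑ j, |A i j| * (u x j)⁻ ≤ ∑ _i : m, ∑ j, C * (u x j)⁻ := by
        gcongr with i _ j _
        exact hC i j
    _ = Fintype.card m * C * ∑ j, (u x j)⁻ := by
        rw [Finset.sum_const, Finset.card_univ, nsmul_eq_mul, ← Finset.mul_sum, mul_assoc]

end LinearSystem

theorem exists_abs_apply_le_of_continuousOn {α m n : Type*} [TopologicalSpace α] [Fintype m]
    [Fintype n] {s : Set α} (hs : IsCompact s) {M : α → Matrix m n ℝ} (hM : ContinuousOn M s) :
    ∃ C, ∀ t ∈ s, ∀ i j, |M t i j| ≤ C := by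
  let := Matrix.normedAddCommGroup (m := m) (n := n) (α := ℝ)
  obtain ⟨C, hC⟩ := hs.exists_bound_of_continuousOn hM
  exact ⟨C, fun t ht i j => (norm_entry_le_entrywise_sup_norm (M t)).trans (hC t ht)⟩

theorem nonneg_invariant_of_metzler_general (n : ℕ) (T : ℝ)
    (M : ℝ → Matrix (Fin n) (Fin n) ℝ)
    (hMcont : ContinuousOn M (Set.Icc 0 T))
    (hMetzler : ∀ t ∈ Set.Icc (0 : ℝ) T, ∀ i j, i ≠ j → 0 ≤ M t i j)
    (lam : ℝ → Fin n → ℝ)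
    (hderiv : ∀ t ∈ Set.Icc (0 : ℝ) T, ∀ i,
      HasDerivAt (fun s => lam s i) ((M t).mulVec (lam t) i) t)
    (h0 : ∀ i, 0 ≤ lam 0 i) :
    ∀ t ∈ Set.Icc (0 : ℝ) T, ∀ i, 0 ≤ lam t i := by
  obtain ⟨C, hC⟩ := exists_abs_apply_le_of_continuousOn isCompact_Icc hMcont
  have hneg_le_zero : ∀ t ∈ Icc (0 : ℝ) T, ∑ i, (lam t i)⁻ ≤ 0 := by
    refine le_zero_of_rightDiniLE_mul_self (K := n * C) ?_ ?_ fun x hx => ?_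
    · refine continuousOn_finsetSum _ fun i _ => continuous_negPart.comp_continuousOn ?_
      exact fun t ht => (hderiv t ht i).continuousAt.continuousWithinAt
    · simp [negPart_eq_zero.2 (h0 _)]
    · have hx' := Ico_subset_Icc_self hx
      simpa only [Fintype.card_fin] using
        Matrix.IsMetzler.rightDiniLE_sum_negPart (hMetzler x hx') (hC x hx') (hderiv x hx')
  intro t ht i
  have hi : (lam t i)⁻ ≤ 0 :=
    (Finset.single_le_sum (fun j _ => negPart_nonneg (lam t j)) (Finset.mem_univ i)).trans
      (hneg_le_zero t ht)
  exact negPart_nonpos.1 hi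

/-- If `M(t)` is a continuous family of Metzler matrices (nonnegative off-diagonal
entries) on `[0,T]` and `λ' = M(t) λ` with `λ(0)` entrywise nonnegative, then `λ(t)`
stays entrywise nonnegative on `[0,T]`. -/
theorem nonneg_invariant_of_metzler (n : ℕ) (hn : 0 < n) (T : ℝ) (hT : 0 < T)
    (M : ℝ → Matrix (Fin n) (Fin n) ℝ)
    (hMcont : ContinuousOn M (Set.Icc 0 T))
    (hMetzler : ∀ t ∈ Set.Icc (0 : ℝ) T, ∀ i j, i ≠ j → 0 ≤ M t i j)
    (lam : ℝ → Fin n → ℝ)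
    (hderiv : ∀ t ∈ Set.Icc (0 : ℝ) T, ∀ i,
      HasDerivAt (fun s => lam s i) ((M t).mulVec (lam t) i) t)
    (h0 : ∀ i, 0 ≤ lam 0 i) :
    ∀ t ∈ Set.Icc (0 : ℝ) T, ∀ i, 0 ≤ lam t i :=
  nonneg_invariant_of_metzler_general n T M hMcont hMetzler lam hderiv h0
end

section
/- Let γ1, γ2 > 0 and reals λ2 > 0, 0 ≤ λ3 ≤ λ2, and define τ* = −(1/(γ1+γ2)) log((γ2 λ2 + (γ1+γ2) λ3)/(λ2 (γ1+2γ2))). Then τ* ≥ 0, and the functions λ2(τ) = λ2 e^{−(γ1+γ2)τ} and λ3(τ) = λ3 + (γ2/(γ1+γ2)) λ2 (1 − e^{−(γ1+γ2)τ}) satisfy λ2(τ*) = λ3(τ*) = (γ2 λ2 + (γ1+γ2) λ3)/(γ1+2γ2). -/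
/-! The time `τ*` is defined by `exp (-(γ1 + γ2) τ*) = A` with
`A = (γ2 λ2 + (γ1+γ2) λ3) / (λ2 (γ1+2γ2))`. Since `0 ≤ λ3 ≤ λ2` we have `0 < A ≤ 1`, so `τ* ≥ 0`,
and substituting `A` for the exponential turns both trajectory identities into rational ones. -/

namespace Real

theorem exp_neg_mul_neg_inv_mul_log {k a : ℝ} (hk : k ≠ 0) (ha : 0 < a) :
    exp (-k * (-(1 / k) * log a)) = a := by
  rw [show -k * (-(1 / k) * log a) = log a by field_simp, exp_log ha]

theorem neg_inv_mul_log_nonneg {k a : ℝ} (hk : 0 < k) (ha₀ : 0 ≤ a) (ha₁ : a ≤ 1) :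
    0 ≤ -(1 / k) * log a := by
  rw [neg_mul, ← mul_neg]
  exact mul_nonneg (by positivity) (neg_nonneg.mpr (log_nonpos ha₀ ha₁))

end Real

section CrossingRatio

variable {γ1 γ2 l2 l3 : ℝ}

theorem crossing_ratio_pos (hγ1 : 0 < γ1) (hγ2 : 0 < γ2) (hl2 : 0 < l2) (hl3 : 0 ≤ l3) :
    0 < (γ2 * l2 + (γ1 + γ2) * l3) / (l2 * (γ1 + 2 * γ2)) := by
  have : 0 ≤ (γ1 + γ2) * l3 := by positivity
  exact div_pos (by nlinarith) (by positivity)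

theorem crossing_ratio_le_one (hγ1 : 0 < γ1) (hγ2 : 0 < γ2) (hl2 : 0 < l2) (hl32 : l3 ≤ l2) :
    (γ2 * l2 + (γ1 + γ2) * l3) / (l2 * (γ1 + 2 * γ2)) ≤ 1 := by
  rw [div_le_one (by positivity)]
  nlinarith

end CrossingRatio

/-- The critical time `τ*` at which the second and third eigenvalues of the 3-level
Λ system equilibrate under the ordered diagonal strategy: `τ* ≥ 0` and both
eigenvalue trajectories take the common value
`(γ2 λ2 + (γ1+γ2) λ3)/(γ1+2γ2)` at `τ*`. -/
theorem critical_time (γ1 γ2 l2 l3 : ℝ) (hγ1 : 0 < γ1) (hγ2 : 0 < γ2)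
    (hl2 : 0 < l2) (hl3 : 0 ≤ l3) (hl32 : l3 ≤ l2) :
    let τstar : ℝ := -(1 / (γ1 + γ2)) *
      Real.log ((γ2 * l2 + (γ1 + γ2) * l3) / (l2 * (γ1 + 2 * γ2)))
    0 ≤ τstar ∧
    l2 * Real.exp (-(γ1 + γ2) * τstar) = (γ2 * l2 + (γ1 + γ2) * l3) / (γ1 + 2 * γ2) ∧
    l3 + γ2 / (γ1 + γ2) * l2 * (1 - Real.exp (-(γ1 + γ2) * τstar))
      = (γ2 * l2 + (γ1 + γ2) * l3) / (γ1 + 2 * γ2) := by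
  intro τstar
  have hsum : 0 < γ1 + γ2 := by linarith
  have hpos := crossing_ratio_pos hγ1 hγ2 hl2 hl3
  have hexp : Real.exp (-(γ1 + γ2) * τstar)
      = (γ2 * l2 + (γ1 + γ2) * l3) / (l2 * (γ1 + 2 * γ2)) :=
    Real.exp_neg_mul_neg_inv_mul_log hsum.ne' hpos
  refine ⟨Real.neg_inv_mul_log_nonneg hsum hpos.le (crossing_ratio_le_one hγ1 hγ2 hl2 hl32),
    ?_, ?_⟩
  · rw [hexp]
    field_simp
  · rw [hexp]
    field_simp
    ring
end

section
/- Assume γ1 ≥ γ2 > 0, μ = (μ1, 0, μ3) with μ1 ≥ 0 ≥ μ3, and λ = (λ1, λ2, λ3) with λ1 ≥ λ2 ≥ λ3 ≥ 0. Then for every 3×3 doubly stochastic real matrix Θ there exists a 3×3 doubly stochastic real matrix Θ' with Θ'_13 = Θ'_31 = 0 such that F(Θ') ≥ F(Θ). -/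
open Matrix Finset

/-- `Θ` is doubly stochastic: nonnegative entries, rows and columns summing to 1. -/
def DoublyStochastic3 (Θ : Matrix (Fin 3) (Fin 3) ℝ) : Prop :=
  (∀ i j, 0 ≤ Θ i j) ∧ (∀ i, ∑ j : Fin 3, Θ i j = 1) ∧ (∀ j, ∑ i : Fin 3, Θ i j = 1)

/-- The matrix `B` of the 3-level Λ system: `B_12 = γ1`, `B_32 = γ2`, all other
entries zero. -/
def Bmat3 (γ1 γ2 : ℝ) : Matrix (Fin 3) (Fin 3) ℝ :=
  Matrix.of ![![0, γ1, 0], ![0, 0, 0], ![0, γ2, 0]]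

/-- The vector `d = (0, −(γ1+γ2), 0)` of the 3-level Λ system. -/
def dvec3 (γ1 γ2 : ℝ) : Fin 3 → ℝ := ![0, -(γ1 + γ2), 0]

/-- The cooling objective `F(Θ) = μᵀ (Θᵀ B Θ + Diag(Θᵀ d)) λ`. -/
def Fobj (γ1 γ2 : ℝ) (μ lam : Fin 3 → ℝ) (Θ : Matrix (Fin 3) (Fin 3) ℝ) : ℝ :=
  μ ⬝ᵥ ((Θᵀ * Bmat3 γ1 γ2 * Θ + Matrix.diagonal (Θᵀ.mulVec (dvec3 γ1 γ2))).mulVec lam)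

/-!
Only row 1 of `Θ` (the excited level) enters the dissipative term of `F`; rows 0 and 2 enter
only through `γ1 Θ₀ᵢ + γ2 Θ₂ᵢ`, paired with `μ` and multiplied by `(Θ λ)₁ ≥ 0`. Replace `Θ` by
the symmetric matrix with the same row 1, corners `Θ₀₀ + Θ₂₀` and `Θ₂₂ + Θ₀₂`, and zero
ground-state coherences: it is again doubly stochastic, and `F` grows by
`(γ1 - γ2)(μ1 Θ₂₀ - μ3 Θ₀₂)(Θ λ)₁ ≥ 0`, since transferring `Θ₂₀` from the `γ2`-row to the
`γ1`-row helps the positive weight `μ1`, and symmetrically for `Θ₀₂` and `μ3 ≤ 0`.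
-/

theorem Fobj_eq (γ1 γ2 : ℝ) (μ lam : Fin 3 → ℝ) (Θ : Matrix (Fin 3) (Fin 3) ℝ) :
    Fobj γ1 γ2 μ lam Θ =
      (μ ⬝ᵥ (γ1 • Θ 0 + γ2 • Θ 2)) * (Θ 1 ⬝ᵥ lam) - (γ1 + γ2) * ∑ i, μ i * Θ 1 i * lam i := by
  simp only [Fobj, Bmat3, dvec3, dotProduct, mulVec, Matrix.add_apply, Matrix.mul_apply,
    transpose_apply, diagonal_apply, of_apply, Pi.add_apply, Pi.smul_apply, smul_eq_mul,
    Fin.sum_univ_three, Fin.isValue, cons_val', cons_val_zero, cons_val_one, cons_val_fin_one,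
    Matrix.cons_val, ↓reduceIte, Fin.reduceEq, zero_ne_one, one_ne_zero]
  ring

def dropGroundCoherence (Θ : Matrix (Fin 3) (Fin 3) ℝ) : Matrix (Fin 3) (Fin 3) ℝ :=
  of ![![Θ 0 0 + Θ 2 0, Θ 1 0, 0],
       ![Θ 1 0, Θ 1 1, Θ 1 2],
       ![0, Θ 1 2, Θ 2 2 + Θ 0 2]]

theorem DoublyStochastic3.dropGroundCoherence {Θ : Matrix (Fin 3) (Fin 3) ℝ}
    (hΘ : DoublyStochastic3 Θ) : DoublyStochastic3 (dropGroundCoherence Θ) := by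
  obtain ⟨hpos, hrow, hcol⟩ := hΘ
  have hr1 := hrow 1
  have hc0 := hcol 0
  have hc2 := hcol 2
  simp only [Fin.sum_univ_three] at hr1 hc0 hc2
  refine ⟨fun i j => ?_, fun i => ?_, fun i => ?_⟩
  · fin_cases i <;> fin_cases j <;>
      simp [_root_.dropGroundCoherence, hpos, add_nonneg]
  all_goals
    fin_cases i <;>
      simp only [_root_.dropGroundCoherence, Fin.sum_univ_three, of_apply, Fin.isValue, Fin.zero_eta,
        Fin.mk_one, Fin.reduceFinMk, cons_val', cons_val_zero, cons_val_one, cons_val_fin_one,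
        Matrix.cons_val, add_zero, zero_add] <;>
      linarith

theorem Fobj_dropGroundCoherence (γ1 γ2 μ1 μ3 : ℝ) (lam : Fin 3 → ℝ)
    (Θ : Matrix (Fin 3) (Fin 3) ℝ) :
    Fobj γ1 γ2 ![μ1, 0, μ3] lam (dropGroundCoherence Θ) =
      Fobj γ1 γ2 ![μ1, 0, μ3] lam Θ + (γ1 - γ2) * (μ1 * Θ 2 0 - μ3 * Θ 0 2) * (Θ 1 ⬝ᵥ lam) := by
  have hrow : dropGroundCoherence Θ 1 = Θ 1 := by
    ext j
    fin_cases j <;> rfl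
  rw [Fobj_eq, Fobj_eq, hrow]
  simp only [dotProduct, Fin.sum_univ_three, dropGroundCoherence, of_apply, Pi.add_apply,
    Pi.smul_apply, smul_eq_mul, Fin.isValue, cons_val', cons_val_zero, cons_val_one,
    cons_val_fin_one, Matrix.cons_val]
  ring

theorem exists_no_ground_coherence_general (γ1 γ2 μ1 μ3 l1 l2 l3 : ℝ)
    (hγ : γ1 ≥ γ2)
    (hμ1 : 0 ≤ μ1) (hμ3 : μ3 ≤ 0)
    (hl12 : l1 ≥ l2) (hl23 : l2 ≥ l3) (hl3 : 0 ≤ l3)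
    (Θ : Matrix (Fin 3) (Fin 3) ℝ) (hΘ : DoublyStochastic3 Θ) :
    ∃ Θ' : Matrix (Fin 3) (Fin 3) ℝ, DoublyStochastic3 Θ' ∧
      Θ' 0 2 = 0 ∧ Θ' 2 0 = 0 ∧
      Fobj γ1 γ2 ![μ1, 0, μ3] ![l1, l2, l3] Θ' ≥ Fobj γ1 γ2 ![μ1, 0, μ3] ![l1, l2, l3] Θ := by
  refine ⟨dropGroundCoherence Θ, hΘ.dropGroundCoherence, rfl, rfl, ?_⟩
  have hlam : 0 ≤ ![l1, l2, l3] := by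
    intro i
    fin_cases i <;> simp <;> linarith
  have hexcited : 0 ≤ Θ 1 ⬝ᵥ ![l1, l2, l3] :=
    dotProduct_nonneg_of_nonneg (fun j => hΘ.1 1 j) hlam
  have hcoherence : 0 ≤ μ1 * Θ 2 0 - μ3 * Θ 0 2 :=
    sub_nonneg.2 ((mul_nonpos_of_nonpos_of_nonneg hμ3 (hΘ.1 0 2)).trans (mul_nonneg hμ1 (hΘ.1 2 0)))
  rw [Fobj_dropGroundCoherence, ge_iff_le, le_add_iff_nonneg_right]
  exact mul_nonneg (mul_nonneg (sub_nonneg.2 hγ) hcoherence) hexcited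

/-- Ground-state coherences can be eliminated: for every doubly stochastic `Θ` there is
a doubly stochastic `Θ'` with `Θ'_13 = Θ'_31 = 0` and `F(Θ') ≥ F(Θ)`. -/
theorem exists_no_ground_coherence (γ1 γ2 μ1 μ3 l1 l2 l3 : ℝ)
    (hγ : γ1 ≥ γ2) (hγ2 : 0 < γ2)
    (hμ1 : 0 ≤ μ1) (hμ3 : μ3 ≤ 0)
    (hl12 : l1 ≥ l2) (hl23 : l2 ≥ l3) (hl3 : 0 ≤ l3)
    (Θ : Matrix (Fin 3) (Fin 3) ℝ) (hΘ : DoublyStochastic3 Θ) :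
    ∃ Θ' : Matrix (Fin 3) (Fin 3) ℝ, DoublyStochastic3 Θ' ∧
      Θ' 0 2 = 0 ∧ Θ' 2 0 = 0 ∧
      Fobj γ1 γ2 ![μ1, 0, μ3] ![l1, l2, l3] Θ' ≥ Fobj γ1 γ2 ![μ1, 0, μ3] ![l1, l2, l3] Θ :=
  exists_no_ground_coherence_general γ1 γ2 μ1 μ3 l1 l2 l3 hγ hμ1 hμ3 hl12 hl23 hl3 Θ hΘ
end

section
/- The function F attains its maximum over the compact triangle T = {(x,y) : x ≥ 0, y ≥ 0, x + y ≤ 1} at some point of the boundary of T (the union of the three edges x = 0, y = 0 and x + y = 1). -/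
/-!
The quadratic part of `F` is `-(γ1 μ1 x + γ2 μ3 y) (x (λ1 - λ2) + y (λ3 - λ2))`, a product of two
linear forms. Along a nonzero direction `d` in the kernel of the first form, `F` is affine, so from
a maximiser of `F` on `T` one can walk along `d` or `-d` without decreasing `F` until the line
leaves `T`; the exit point is again a maximiser and lies on an edge of `T`.
-/

open Set

section Ray

variable {E : Type*} [AddCommGroup E] [TopologicalSpace E] [IsTopologicalAddGroup E]
  [Module ℝ E] [ContinuousSMul ℝ E] [T2Space E]

theorem IsCompact.exists_nonneg_add_smul_mem_diff_interior {K : Set E} (hK : IsCompact K)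
    {p : E} (hp : p ∈ K) {d : E} (hd : d ≠ 0) :
    ∃ t : ℝ, 0 ≤ t ∧ p + t • d ∈ K \ interior K := by
  let ray : ℝ → E := fun t => p + t • d
  have hray : Topology.IsClosedEmbedding ray :=
    (Homeomorph.addLeft p).isClosedEmbedding.comp (isClosedEmbedding_smul_left hd)
  set S := ray ⁻¹' K
  have hS : IsCompact S := hray.isCompact_preimage hK
  have h0 : (0 : ℝ) ∈ S := by simpa [S, ray] using hp
  refine ⟨sSup S, le_csSup hS.bddAbove h0, hS.sSup_mem ⟨0, h0⟩, fun hint => ?_⟩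
  have hSup : sSup S ∈ interior S := preimage_interior_subset_interior_preimage hray.continuous hint
  have hS_Iic : S ⊆ Iic (sSup S) := fun t ht => le_csSup hS.bddAbove ht
  have hlt := interior_mono hS_Iic hSup
  rw [interior_Iic] at hlt
  exact (mem_Iio.1 hlt).false

theorem IsCompact.exists_isMaxOn_diff_interior_of_affine_along {K : Set E} (hK : IsCompact K)
    (hne : K.Nonempty) {f : E → ℝ} (hf : ContinuousOn f K) {d : E} (hd : d ≠ 0)
    (haff : ∀ p, ∃ c, ∀ t : ℝ, f (p + t • d) = f p + t * c) :
    ∃ p ∈ K \ interior K, IsMaxOn f K p := by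
  obtain ⟨p, hpK, hmax⟩ := hK.exists_isMaxOn hne hf
  obtain ⟨c, hc⟩ := haff p
  obtain ⟨e, he, hfe⟩ : ∃ e : E, e ≠ 0 ∧ ∀ t : ℝ, 0 ≤ t → f p ≤ f (p + t • e) := by
    rcases le_total 0 c with hc0 | hc0
    · exact ⟨d, hd, fun t ht => by rw [hc]; nlinarith⟩
    · exact ⟨-d, neg_ne_zero.2 hd, fun t ht => by rw [smul_neg, ← neg_smul, hc]; nlinarith⟩
  obtain ⟨t, ht, hq⟩ := hK.exists_nonneg_add_smul_mem_diff_interior hpK he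
  exact ⟨_, hq, fun q hqK => (hmax hqK).trans (hfe t ht)⟩

end Ray

def triangle : Set (ℝ × ℝ) := {p | 0 ≤ p.1 ∧ 0 ≤ p.2 ∧ p.1 + p.2 ≤ 1}

theorem isCompact_triangle : IsCompact triangle := by
  have hclosed : IsClosed triangle :=
    (isClosed_le continuous_const continuous_fst).inter <|
      (isClosed_le continuous_const continuous_snd).inter <|
        isClosed_le (continuous_fst.add continuous_snd) continuous_const
  refine (isCompact_Icc (a := ((0 : ℝ), (0 : ℝ))) (b := (1, 1))).of_isClosed_subset hclosed ?_
  rintro ⟨x, y⟩ ⟨hx, hy, hxy⟩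
  exact ⟨⟨hx, hy⟩, by dsimp only; linarith, by dsimp only; linarith⟩

theorem mem_edge_of_mem_triangle_diff_interior {p : ℝ × ℝ}
    (hp : p ∈ triangle \ interior triangle) : p.1 = 0 ∨ p.2 = 0 ∨ p.1 + p.2 = 1 := by
  obtain ⟨⟨hx, hy, hxy⟩, hint⟩ := hp
  by_contra! hedge
  have hopen : IsOpen {q : ℝ × ℝ | 0 < q.1 ∧ 0 < q.2 ∧ q.1 + q.2 < 1} :=
    (isOpen_lt continuous_const continuous_fst).inter <|
      (isOpen_lt continuous_const continuous_snd).inter <|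
        isOpen_lt (continuous_fst.add continuous_snd) continuous_const
  have hpU : p ∈ {q : ℝ × ℝ | 0 < q.1 ∧ 0 < q.2 ∧ q.1 + q.2 < 1} :=
    ⟨hx.lt_of_ne' hedge.1, hy.lt_of_ne' hedge.2.1, hxy.lt_of_ne hedge.2.2⟩
  have hUT : {q : ℝ × ℝ | 0 < q.1 ∧ 0 < q.2 ∧ q.1 + q.2 < 1} ⊆ triangle :=
    fun q hq => ⟨hq.1.le, hq.2.1.le, hq.2.2.le⟩
  exact hint (interior_maximal hUT hopen hpU)

theorem exists_ne_zero_mul_fst_add_mul_snd_eq_zero (a b : ℝ) :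
    ∃ d : ℝ × ℝ, d ≠ 0 ∧ a * d.1 + b * d.2 = 0 := by
  by_cases hab : a = 0 ∧ b = 0
  · exact ⟨(1, 0), by simp, by simp [hab.1]⟩
  · refine ⟨(-b, a), fun h => hab ?_, by ring⟩
    simp only [Prod.mk_eq_zero, neg_eq_zero] at h
    exact h.symm

theorem max_on_boundary_general (γ1 γ2 μ1 μ3 l1 l2 l3 : ℝ) :
    let F : ℝ × ℝ → ℝ := fun p =>
      (γ1 * μ1 * (1 - p.1) + γ2 * μ3 * (1 - p.2))
        * (l2 + p.1 * (l1 - l2) + p.2 * (l3 - l2))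
      - (γ1 + γ2) * (μ1 * p.1 * l1 + μ3 * p.2 * l3)
    let T : Set (ℝ × ℝ) := {p | 0 ≤ p.1 ∧ 0 ≤ p.2 ∧ p.1 + p.2 ≤ 1}
    ∃ p ∈ T, (p.1 = 0 ∨ p.2 = 0 ∨ p.1 + p.2 = 1) ∧ ∀ q ∈ T, F q ≤ F p := by
  intro F T
  obtain ⟨d, hd, hker⟩ := exists_ne_zero_mul_fst_add_mul_snd_eq_zero (γ1 * μ1) (γ2 * μ3)
  have haff : ∀ p, ∃ c, ∀ t : ℝ, F (p + t • d) = F p + t * c := fun p =>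
    ⟨(γ1 * μ1 * (1 - p.1) + γ2 * μ3 * (1 - p.2)) * (d.1 * (l1 - l2) + d.2 * (l3 - l2))
      - (γ1 + γ2) * (μ1 * d.1 * l1 + μ3 * d.2 * l3), fun t => by
      simp only [F, Prod.fst_add, Prod.snd_add, Prod.smul_fst, Prod.smul_snd, smul_eq_mul]
      linear_combination
        (-t * (l2 + (p.1 + t * d.1) * (l1 - l2) + (p.2 + t * d.2) * (l3 - l2))) * hker⟩
  have hF : Continuous F := by fun_prop
  obtain ⟨p, hp, hmax⟩ := isCompact_triangle.exists_isMaxOn_diff_interior_of_affine_along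
    ⟨0, by simp [triangle]⟩ hF.continuousOn hd haff
  exact ⟨p, hp.1, mem_edge_of_mem_triangle_diff_interior hp, fun q hq => hmax hq⟩

/-- The restricted 3-level cooling objective
`F(x,y) = (γ1 μ1 (1−x) + γ2 μ3 (1−y))(λ2 + x(λ1−λ2) + y(λ3−λ2)) − (γ1+γ2)(μ1 x λ1 + μ3 y λ3)`
attains its maximum over the triangle `T = {x ≥ 0, y ≥ 0, x + y ≤ 1}` at a boundary
point of `T`. -/
theorem max_on_boundary (γ1 γ2 μ1 μ3 l1 l2 l3 : ℝ)
    (hγ : γ1 ≥ γ2) (hγ2 : 0 < γ2)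
    (hμ1 : 0 ≤ μ1) (hμ3 : μ3 ≤ 0)
    (hl12 : l1 ≥ l2) (hl23 : l2 ≥ l3) (hl3 : 0 ≤ l3) :
    let F : ℝ × ℝ → ℝ := fun p =>
      (γ1 * μ1 * (1 - p.1) + γ2 * μ3 * (1 - p.2))
        * (l2 + p.1 * (l1 - l2) + p.2 * (l3 - l2))
      - (γ1 + γ2) * (μ1 * p.1 * l1 + μ3 * p.2 * l3)
    let T : Set (ℝ × ℝ) := {p | 0 ≤ p.1 ∧ 0 ≤ p.2 ∧ p.1 + p.2 ≤ 1}
    ∃ p ∈ T, (p.1 = 0 ∨ p.2 = 0 ∨ p.1 + p.2 = 1) ∧ ∀ q ∈ T, F q ≤ F p :=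
  max_on_boundary_general γ1 γ2 μ1 μ3 l1 l2 l3
end

section
/- Let γ1 ≥ γ2 > 0, λ1 ≥ λ2 ≥ λ3 ≥ 0, and τ ≥ 0 be such that (γ1+2γ2) λ2 e^{−(γ1+γ2)τ} ≥ γ2 λ2 + (γ1+γ2) λ3. Set m = (γ1/(γ1+γ2))(1 − e^{−(γ1+γ2)τ}), μ1 = 1 − m and μ3 = −m. Then (λ3 − λ2)(γ1 μ1 + γ2 μ3) − γ2 μ3 λ2 − (γ1+γ2) μ3 λ3 ≤ 0. (This quantity is the partial derivative ∂F/∂y of the 3-level cooling objective at the corner (x,y) = (0,0) with the regime-one return-function gradient shifted so that μ2 = 0.) -/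
/-! With `s = γ1 + γ2`, `E = e^{−sτ}` and `m = (γ1/s)(1 − E)` we have `γ1 μ1 + γ2 μ3 = γ1 − s m = γ1 E`,
and the slope collapses to `(γ1/s) · (γ2 λ2 + s λ3 − (γ1 + 2γ2) λ2 E)`; the second factor is
nonpositive exactly by the critical-time hypothesis. -/

lemma slope_y_eq_mul_crit_gap (γ1 γ2 l2 l3 E : ℝ) (hs : γ1 + γ2 ≠ 0) :
    let m : ℝ := γ1 / (γ1 + γ2) * (1 - E)
    (l3 - l2) * (γ1 * (1 - m) + γ2 * -m) - γ2 * -m * l2 - (γ1 + γ2) * -m * l3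
      = γ1 / (γ1 + γ2) * (γ2 * l2 + (γ1 + γ2) * l3 - (γ1 + 2 * γ2) * l2 * E) := by
  intro m
  simp only [m]
  field_simp
  ring

theorem slope_y_nonpos_first_regime_general (γ1 γ2 l2 l3 τ : ℝ)
    (hγ : γ1 ≥ γ2) (hγ2 : 0 < γ2)
    (hcrit : (γ1 + 2 * γ2) * l2 * Real.exp (-(γ1 + γ2) * τ)
      ≥ γ2 * l2 + (γ1 + γ2) * l3) :
    let m : ℝ := γ1 / (γ1 + γ2) * (1 - Real.exp (-(γ1 + γ2) * τ))
    let μ1 : ℝ := 1 - m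
    let μ3 : ℝ := -m
    (l3 - l2) * (γ1 * μ1 + γ2 * μ3) - γ2 * μ3 * l2 - (γ1 + γ2) * μ3 * l3 ≤ 0 := by
  intro m μ1 μ3
  have hs : 0 < γ1 + γ2 := by linarith
  rw [slope_y_eq_mul_crit_gap γ1 γ2 l2 l3 _ hs.ne']
  exact mul_nonpos_of_nonneg_of_nonpos (div_nonneg (by linarith) hs.le) (by linarith)

/-- The partial derivative `∂F/∂y` of the restricted cooling objective at the corner
`(0,0)` is nonpositive in the first regime (`τ ≤ τ*`), with the return-function
gradient `μ1 = 1 − m`, `μ2 = 0`, `μ3 = −m` where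
`m = (γ1/(γ1+γ2))(1 − e^{−(γ1+γ2)τ})`. -/
theorem slope_y_nonpos_first_regime (γ1 γ2 l1 l2 l3 τ : ℝ)
    (hγ : γ1 ≥ γ2) (hγ2 : 0 < γ2)
    (hl12 : l1 ≥ l2) (hl23 : l2 ≥ l3) (hl3 : 0 ≤ l3) (hτ : 0 ≤ τ)
    (hcrit : (γ1 + 2 * γ2) * l2 * Real.exp (-(γ1 + γ2) * τ)
      ≥ γ2 * l2 + (γ1 + γ2) * l3) :
    let m : ℝ := γ1 / (γ1 + γ2) * (1 - Real.exp (-(γ1 + γ2) * τ))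
    let μ1 : ℝ := 1 - m
    let μ3 : ℝ := -m
    (l3 - l2) * (γ1 * μ1 + γ2 * μ3) - γ2 * μ3 * l2 - (γ1 + γ2) * μ3 * l3 ≤ 0 :=
  slope_y_nonpos_first_regime_general γ1 γ2 l2 l3 τ hγ hγ2 hcrit
end

section
/- Let γ1 ≥ γ2 > 0, let λ = (λ1, λ2, λ3) with λ1 ≥ λ2 ≥ λ3 ≥ 0 and λ2 > 0, and let s ≥ 0. Set μ = (0, −((2γ2 λ2 + γ1 λ3)/(λ2 (γ1+2γ2))) e^{−(γ1/2)s}, −e^{−(γ1/2)s}). Then for every 3×3 doubly stochastic real matrix Θ, F(Θ) ≤ F(I), where I is the 3×3 identity matrix. (Hamilton–Jacobi–Bellman verification of the ordered diagonal cooling strategy for the 3-level Λ system in the regime τ > τ*.) -/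
open Matrix Finset

/-! Write `E = exp (-(γ1 / 2) * s)`, `N = 2 γ2 l2 + γ1 l3` and `D = l2 (γ1 + 2 γ2)`, so that
`μ = -E (0, N / D, 1)`. Then `(D / E) (F(I) - F(Θ))` is a polynomial in the entries
`θᵢⱼ = Θ i j` (indices from 0); after eliminating `θ₂₁`, `θ₂₂`, `θ₁₀` by the row and column sums
it is exactly a sum of four products of factors that are nonnegative because `γ1 ≥ γ2 ≥ 0`,
`l1 ≥ l2 ≥ l3 ≥ 0` and `Θ` is doubly stochastic. -/

theorem Fobj_eq_sum (γ1 γ2 : ℝ) (μ lam : Fin 3 → ℝ) (Θ : Matrix (Fin 3) (Fin 3) ℝ) :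
    Fobj γ1 γ2 μ lam Θ =
      ∑ k, μ k * ((Θ *ᵥ lam) 1 * (γ1 * Θ 0 k + γ2 * Θ 2 k) - (γ1 + γ2) * Θ 1 k * lam k) := by
  simp only [Fobj, dotProduct, mulVec, Bmat3, dvec3, Matrix.add_apply, Matrix.mul_apply,
    transpose_apply, of_apply, cons_val', cons_val_fin_one, Fin.sum_univ_three, Fin.isValue,
    cons_val_zero, cons_val_one, Matrix.cons_val, diagonal_apply, Fin.reduceEq, ↓reduceIte,
    zero_ne_one, one_ne_zero]
  ring

theorem hjb_gap_nonneg (γ1 γ2 l1 l2 l3 θ₀₁ θ₁₁ θ₂₁ θ₀₂ θ₁₂ θ₂₂ θ₁₀ : ℝ)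
    (hγ : γ2 ≤ γ1) (hγ2 : 0 ≤ γ2) (hl12 : l2 ≤ l1) (hl23 : l3 ≤ l2) (hl3 : 0 ≤ l3)
    (hθ₁₁ : 0 ≤ θ₁₁) (hθ₀₂ : 0 ≤ θ₀₂) (hθ₁₂ : 0 ≤ θ₁₂) (hθ₁₀ : 0 ≤ θ₁₀)
    (hcol1 : θ₀₁ + θ₁₁ + θ₂₁ = 1) (hcol2 : θ₀₂ + θ₁₂ + θ₂₂ = 1)
    (hrow1 : θ₁₀ + θ₁₁ + θ₁₂ = 1) (hrow2 : θ₂₁ + θ₂₂ ≤ 1) :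
    0 ≤ (2 * γ2 * l2 + γ1 * l3) *
          ((γ1 * θ₀₁ + γ2 * θ₂₁) * (θ₁₀ * l1 + θ₁₁ * l2 + θ₁₂ * l3) - (γ1 + γ2) * θ₁₁ * l2)
      + l2 * (γ1 + 2 * γ2) *
          ((γ1 * θ₀₂ + γ2 * θ₂₂) * (θ₁₀ * l1 + θ₁₁ * l2 + θ₁₂ * l3) - (γ1 + γ2) * θ₁₂ * l3)
      + (γ1 + γ2) * (2 * γ2 * l2 + γ1 * l3) * l2 - γ2 * (l2 * (γ1 + 2 * γ2)) * l2 := by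
  obtain rfl : θ₂₁ = 1 - θ₀₁ - θ₁₁ := by linarith
  obtain rfl : θ₂₂ = 1 - θ₀₂ - θ₁₂ := by linarith
  obtain rfl : θ₁₀ = 1 - θ₁₁ - θ₁₂ := by linarith
  have hγ1 : 0 ≤ γ1 := hγ2.trans hγ
  have hl2 : 0 ≤ l2 := hl3.trans hl23
  have hl1 : 0 ≤ l1 := hl2.trans hl12
  have hθ₁₂_le_one : 0 ≤ 1 - θ₁₂ := by linarith
  -- As `D - N = γ1 (l2 - l3)` and `θ₀₁ + θ₀₂ ≥ θ₁₀`, `hS1` is what is lost by replacing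
  -- `N θ₀₁ + D θ₀₂` with `N θ₁₀`; `hS2` is what is lost by replacing `l1` with `l2` in
  -- `θ₁₀ l1 + θ₁₁ l2 + θ₁₂ l3`; what is left is `hS3 + hS4`.
  have hS1 : 0 ≤ (γ1 - γ2) * ((1 - θ₁₁ - θ₁₂) * l1 + θ₁₁ * l2 + θ₁₂ * l3) *
      ((2 * γ2 * l2 + γ1 * l3) * (θ₀₁ + θ₀₂ - (1 - θ₁₁ - θ₁₂)) + γ1 * (l2 - l3) * θ₀₂) := by
    have : 0 ≤ θ₀₁ + θ₀₂ - (1 - θ₁₁ - θ₁₂) := by linarith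
    have : 0 ≤ γ1 - γ2 := by linarith
    have : 0 ≤ l2 - l3 := by linarith
    positivity
  have hS2 : 0 ≤ (l1 - l2) * (1 - θ₁₁ - θ₁₂) *
      ((2 * γ2 * l2 + γ1 * l3) * (γ1 * (1 - θ₁₁ - θ₁₂) + γ2 * θ₁₂)
        + l2 * (γ1 + 2 * γ2) * γ2 * (1 - θ₁₂)) := by
    have : 0 ≤ l1 - l2 := by linarith
    positivity
  have hS3 : 0 ≤ (1 - θ₁₁ - θ₁₂) * (2 * γ2 * l2 + γ1 * l3) *
      (γ1 * (l2 * (1 - θ₁₂) + l3 * θ₁₂) + (γ1 + γ2) * l2) := by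
    positivity
  have hS4 : 0 ≤ γ1 * γ2 * (l2 - l3) ^ 2 * θ₁₂ ^ 2 := by positivity
  linear_combination hS1 + hS2 + hS3 + hS4

theorem hjb_second_regime_general (γ1 γ2 l1 l2 l3 s : ℝ)
    (hγ : γ1 ≥ γ2) (hγ2 : 0 < γ2)
    (hl12 : l1 ≥ l2) (hl23 : l2 ≥ l3) (hl3 : 0 ≤ l3) (hl2 : 0 < l2) :
    ∀ Θ : Matrix (Fin 3) (Fin 3) ℝ, DoublyStochastic3 Θ →
      Fobj γ1 γ2
          ![0, -((2 * γ2 * l2 + γ1 * l3) / (l2 * (γ1 + 2 * γ2))) * Real.exp (-(γ1 / 2) * s),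
            -Real.exp (-(γ1 / 2) * s)] ![l1, l2, l3] Θ
        ≤ Fobj γ1 γ2
            ![0, -((2 * γ2 * l2 + γ1 * l3) / (l2 * (γ1 + 2 * γ2))) * Real.exp (-(γ1 / 2) * s),
              -Real.exp (-(γ1 / 2) * s)] ![l1, l2, l3]
            (1 : Matrix (Fin 3) (Fin 3) ℝ) := by
  rintro Θ ⟨hpos, hrow, hcol⟩
  simp only [Fin.sum_univ_three] at hrow hcol
  have hgap := hjb_gap_nonneg γ1 γ2 l1 l2 l3
    (Θ 0 1) (Θ 1 1) (Θ 2 1) (Θ 0 2) (Θ 1 2) (Θ 2 2) (Θ 1 0)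
    hγ hγ2.le hl12 hl23 hl3 (hpos 1 1) (hpos 0 2) (hpos 1 2) (hpos 1 0) (hcol 1) (hcol 2) (hrow 1)
    (by linarith [hrow 2, hpos 2 0])
  have hγ12 : 0 < γ1 + 2 * γ2 := by linarith
  have hscale : 0 < Real.exp (-(γ1 / 2) * s) / (l2 * (γ1 + 2 * γ2)) :=
    div_pos (Real.exp_pos _) (mul_pos hl2 hγ12)
  refine sub_nonneg.mp ((mul_nonneg hscale.le hgap).trans_eq ?_)
  simp only [Fobj_eq_sum, Fin.sum_univ_three, mulVec, dotProduct, Fin.isValue, one_apply,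
    Fin.reduceEq, ↓reduceIte, zero_ne_one, one_ne_zero, cons_val_zero, cons_val_one,
    Matrix.cons_val]
  field_simp
  ring

/-- HJB verification of the ordered diagonal strategy in the second regime (`τ > τ*`):
the identity maximizes `F` over doubly stochastic matrices, with
`μ = (0, −((2γ2 λ2 + γ1 λ3)/(λ2(γ1+2γ2))) e^{−(γ1/2)s}, −e^{−(γ1/2)s})`. -/
theorem hjb_second_regime (γ1 γ2 l1 l2 l3 s : ℝ)
    (hγ : γ1 ≥ γ2) (hγ2 : 0 < γ2)
    (hl12 : l1 ≥ l2) (hl23 : l2 ≥ l3) (hl3 : 0 ≤ l3) (hl2 : 0 < l2) (hs : 0 ≤ s) :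
    ∀ Θ : Matrix (Fin 3) (Fin 3) ℝ, DoublyStochastic3 Θ →
      Fobj γ1 γ2
          ![0, -((2 * γ2 * l2 + γ1 * l3) / (l2 * (γ1 + 2 * γ2))) * Real.exp (-(γ1 / 2) * s),
            -Real.exp (-(γ1 / 2) * s)] ![l1, l2, l3] Θ
        ≤ Fobj γ1 γ2
            ![0, -((2 * γ2 * l2 + γ1 * l3) / (l2 * (γ1 + 2 * γ2))) * Real.exp (-(γ1 / 2) * s),
              -Real.exp (-(γ1 / 2) * s)] ![l1, l2, l3]
            (1 : Matrix (Fin 3) (Fin 3) ℝ) :=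
  hjb_second_regime_general γ1 γ2 l1 l2 l3 s hγ hγ2 hl12 hl23 hl3 hl2
end
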